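/- Convergence of the averaged (expected-update) Survival Q-learning iteration (deterministic counterpart of Theorem 2): let (α_k) be a sequence in [0,1] with ∑_{k=0}^∞ α_k = ∞, let Q^0 : S × A → ℝ be bounded measurable, and define Q^{k+1} = (1 − α_k) · Q^k + α_k · T(Q^k). Then ‖Q^k − J*‖∞ ≤ (∏_{j<k} (1 − α_j(1 − γ))) · ‖Q^0 − J*‖∞ for every k, and ‖Q^k − J*‖∞ → 0 as k → ∞, where J* is the unique bounded measurable fixed point of T. -/

import Mathlib

open MeasureTheory ProbabilityTheory Filter

/-- Sup norm of a function on state-action pairs. -/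
noncomputable def supNorm {S A : Type*} (J : S × A → ℝ) : ℝ := ⨆ sa, |J sa|

/-- Policy-evaluation operator `T_π`. -/
noncomputable def Tpol {S A : Type*} [MeasurableSpace S] [MeasurableSpace A]
    (p : ProbabilityTheory.Kernel (S × A) S) (pol : ProbabilityTheory.Kernel S A)
    (R : S → Bool) (h : S × A → ℝ) (J : S × A → ℝ) : S × A → ℝ :=
  fun sa => if R sa.1 = true then 1
    else (1 - h sa) * ∫ s', (∫ a', J (s', a') ∂(pol s')) ∂(p sa)

/-- Bellman optimality operator `T`. -/
noncomputable def Topt {S A : Type*} [MeasurableSpace S] [MeasurableSpace A]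
    [Fintype A] [Nonempty A]
    (p : ProbabilityTheory.Kernel (S × A) S)
    (R : S → Bool) (h : S × A → ℝ) (J : S × A → ℝ) : S × A → ℝ :=
  fun sa => if R sa.1 = true then 1
    else (1 - h sa) * ∫ s', (Finset.univ.sup' Finset.univ_nonempty fun a' => J (s', a')) ∂(p sa)

/-! The Bellman operator `T` is a `γ`-contraction in the sup norm, because outside the release
set the continuation value is damped by `1 - h ≤ γ`. The averaged update
`Q ↦ (1 - α) Q + α T Q` therefore contracts the distance to the fixed point `J*` by the factor
`1 - α (1 - γ)`, and the product of these factors tends to zero since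
`∏ (1 - u_j) ≤ exp (-∑ u_j)` and `∑ α_j` diverges. -/

section Products

lemma le_prod_mul_of_le_mul {c d : ℕ → ℝ} (hc : ∀ k, 0 ≤ c k)
    (hd : ∀ k, d (k + 1) ≤ c k * d k) (k : ℕ) :
    d k ≤ (∏ j ∈ Finset.range k, c j) * d 0 := by
  induction k with
  | zero => simp
  | succ k ih =>
    calc d (k + 1) ≤ c k * d k := hd k
      _ ≤ c k * ((∏ j ∈ Finset.range k, c j) * d 0) := mul_le_mul_of_nonneg_left ih (hc k)
      _ = (∏ j ∈ Finset.range (k + 1), c j) * d 0 := by rw [Finset.prod_range_succ]; ring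

lemma tendsto_prod_one_sub_of_tendsto_sum {u : ℕ → ℝ} (hu : ∀ k, u k ≤ 1)
    (hsum : Tendsto (fun n => ∑ k ∈ Finset.range n, u k) atTop atTop) :
    Tendsto (fun n => ∏ k ∈ Finset.range n, (1 - u k)) atTop (nhds 0) := by
  have hle : ∀ n, ∏ k ∈ Finset.range n, (1 - u k) ≤ Real.exp (-∑ k ∈ Finset.range n, u k) := by
    intro n
    calc ∏ k ∈ Finset.range n, (1 - u k)
        ≤ ∏ k ∈ Finset.range n, Real.exp (-u k) :=
          Finset.prod_le_prod (fun k _ => sub_nonneg.2 (hu k))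
            fun k _ => Real.one_sub_le_exp_neg (u k)
      _ = Real.exp (-∑ k ∈ Finset.range n, u k) := by
          rw [← Real.exp_sum, Finset.sum_neg_distrib]
  exact squeeze_zero (fun n => Finset.prod_nonneg fun k _ => sub_nonneg.2 (hu k)) hle
    (Real.tendsto_exp_atBot.comp (tendsto_neg_atTop_atBot.comp hsum))

end Products

section SupNorm

variable {S A : Type*}

lemma supNorm_nonneg (J : S × A → ℝ) : 0 ≤ supNorm J :=
  Real.iSup_nonneg fun _ => abs_nonneg _

lemma abs_le_supNorm {J : S × A → ℝ} (hJ : ∃ C, ∀ sa, |J sa| ≤ C) (sa : S × A) :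
    |J sa| ≤ supNorm J := by
  obtain ⟨C, hC⟩ := hJ
  exact le_ciSup ⟨C, Set.forall_mem_range.2 hC⟩ sa

lemma supNorm_le {J : S × A → ℝ} {D : ℝ} (hJ : ∀ sa, |J sa| ≤ D) (hD : 0 ≤ D) :
    supNorm J ≤ D :=
  Real.iSup_le hJ hD

lemma exists_abs_sub_le {J₁ J₂ : S × A → ℝ} (h₁ : ∃ C, ∀ sa, |J₁ sa| ≤ C)
    (h₂ : ∃ C, ∀ sa, |J₂ sa| ≤ C) : ∃ C, ∀ sa, |(J₁ - J₂) sa| ≤ C := by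
  obtain ⟨C₁, hC₁⟩ := h₁
  obtain ⟨C₂, hC₂⟩ := h₂
  exact ⟨C₁ + C₂, fun sa => (abs_sub _ _).trans (add_le_add (hC₁ sa) (hC₂ sa))⟩

end SupNorm

section ActionMax

variable {S A : Type*} [Fintype A] [Nonempty A]

def actionMax (J : S × A → ℝ) (s : S) : ℝ :=
  Finset.univ.sup' Finset.univ_nonempty fun a => J (s, a)

lemma measurable_actionMax [MeasurableSpace S] [MeasurableSpace A] {J : S × A → ℝ}
    (hJ : Measurable J) : Measurable (actionMax J) := by
  have : actionMax J = Finset.univ.sup' Finset.univ_nonempty fun a s => J (s, a) := by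
    ext s
    exact (Finset.sup'_apply (f := fun a (s : S) => J (s, a)) _ s).symm
  rw [this]
  exact Finset.measurable_sup' _ fun a _ => hJ.comp (measurable_id.prodMk measurable_const)

lemma abs_actionMax_le {J : S × A → ℝ} {C : ℝ} (hC : ∀ sa, |J sa| ≤ C) (s : S) :
    |actionMax J s| ≤ C := by
  obtain ⟨a⟩ := ‹Nonempty A›
  refine abs_le.2 ⟨(abs_le.1 (hC (s, a))).1.trans ?_, ?_⟩
  · exact Finset.le_sup' (fun a => J (s, a)) (Finset.mem_univ a)
  · exact Finset.sup'_le _ _ fun a _ => (abs_le.1 (hC (s, a))).2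

lemma actionMax_le_actionMax_add {J₁ J₂ : S × A → ℝ} {D : ℝ} (hD : ∀ sa, J₁ sa ≤ J₂ sa + D)
    (s : S) : actionMax J₁ s ≤ actionMax J₂ s + D :=
  Finset.sup'_le _ _ fun a _ =>
    (hD (s, a)).trans (add_le_add_left (Finset.le_sup' (fun a => J₂ (s, a)) (Finset.mem_univ a)) D)

lemma abs_actionMax_sub_actionMax_le {J₁ J₂ : S × A → ℝ} {D : ℝ}
    (hD : ∀ sa, |J₁ sa - J₂ sa| ≤ D) (s : S) : |actionMax J₁ s - actionMax J₂ s| ≤ D := by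
  have h₁ : actionMax J₁ s ≤ actionMax J₂ s + D :=
    actionMax_le_actionMax_add (fun sa => by linarith [(abs_sub_le_iff.1 (hD sa)).1]) s
  have h₂ : actionMax J₂ s ≤ actionMax J₁ s + D :=
    actionMax_le_actionMax_add (fun sa => by linarith [(abs_sub_le_iff.1 (hD sa)).2]) s
  exact abs_sub_le_iff.2 ⟨by linarith, by linarith⟩

end ActionMax

section Bellman

variable {S A : Type*} [MeasurableSpace S] [MeasurableSpace A] [Fintype A] [Nonempty A]
  (p : Kernel (S × A) S) (R : S → Bool) (h : S × A → ℝ)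

lemma Topt_apply (J : S × A → ℝ) (sa : S × A) :
    Topt p R h J sa = if R sa.1 = true then 1 else (1 - h sa) * ∫ s', actionMax J s' ∂(p sa) :=
  rfl

lemma measurable_Topt (hR : Measurable R) (hh : Measurable h) {J : S × A → ℝ}
    (hJ : Measurable J) : Measurable (Topt p R h J) := by
  have hint : Measurable fun sa => ∫ s', actionMax J s' ∂(p sa) :=
    ((measurable_actionMax hJ).stronglyMeasurable.integral_kernel (κ := p)).measurable
  exact Measurable.ite ((hR.comp measurable_fst) (measurableSet_singleton true))
    measurable_const ((measurable_const.sub hh).mul hint)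

variable [IsMarkovKernel p]

lemma abs_Topt_le (hh01 : ∀ sa, 0 ≤ h sa ∧ h sa ≤ 1) {J : S × A → ℝ} {C : ℝ}
    (hC : ∀ sa, |J sa| ≤ C) (sa : S × A) : |Topt p R h J sa| ≤ max 1 C := by
  rw [Topt_apply]
  split_ifs
  · simp
  · have h_damp : |1 - h sa| ≤ 1 := abs_le.2 ⟨by linarith [hh01 sa], by linarith [hh01 sa]⟩
    have h_int : |∫ s', actionMax J s' ∂(p sa)| ≤ C := by
      simpa using norm_integral_le_of_norm_le_const (μ := p sa)
        (Eventually.of_forall fun s' => (Real.norm_eq_abs _).trans_le (abs_actionMax_le hC s'))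
    rw [abs_mul]
    exact ((mul_le_of_le_one_left (abs_nonneg _) h_damp).trans h_int).trans (le_max_right 1 C)

lemma integrable_actionMax {J : S × A → ℝ} (hJ : Measurable J) (hb : ∃ C, ∀ sa, |J sa| ≤ C)
    (sa : S × A) : Integrable (actionMax J) (p sa) := by
  obtain ⟨C, hC⟩ := hb
  exact (integrable_const C).mono' (measurable_actionMax hJ).aestronglyMeasurable
    (Eventually.of_forall (abs_actionMax_le hC))

lemma abs_Topt_sub_Topt_le (hh1 : ∀ sa, h sa ≤ 1) {δ : ℝ} (hδ1 : δ ≤ 1)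
    (hhaz : ∀ sa, R sa.1 = false → δ ≤ h sa) {J₁ J₂ : S × A → ℝ}
    (hJ₁ : Measurable J₁) (hb₁ : ∃ C, ∀ sa, |J₁ sa| ≤ C)
    (hJ₂ : Measurable J₂) (hb₂ : ∃ C, ∀ sa, |J₂ sa| ≤ C)
    {D : ℝ} (hD : ∀ sa, |J₁ sa - J₂ sa| ≤ D) (sa : S × A) :
    |Topt p R h J₁ sa - Topt p R h J₂ sa| ≤ (1 - δ) * D := by
  have hD0 : 0 ≤ D := (abs_nonneg _).trans (hD sa)
  rw [Topt_apply, Topt_apply]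
  split_ifs with hRs
  · simpa using mul_nonneg (sub_nonneg.2 hδ1) hD0
  · have h_damp : |1 - h sa| ≤ 1 - δ := by
      have := hhaz sa (Bool.eq_false_iff.2 hRs)
      exact abs_le.2 ⟨by linarith [hh1 sa], by linarith⟩
    have h_int : |∫ s', (actionMax J₁ s' - actionMax J₂ s') ∂(p sa)| ≤ D := by
      simpa using norm_integral_le_of_norm_le_const (μ := p sa)
        (Eventually.of_forall fun s' =>
          (Real.norm_eq_abs _).trans_le (abs_actionMax_sub_actionMax_le hD s'))
    rw [← mul_sub, ← integral_sub (integrable_actionMax p hJ₁ hb₁ sa)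
      (integrable_actionMax p hJ₂ hb₂ sa), abs_mul]
    exact mul_le_mul h_damp h_int (abs_nonneg _) ((abs_nonneg _).trans h_damp)

end Bellman

section Averaged

variable {S A : Type*} [MeasurableSpace S] [MeasurableSpace A] [Fintype A] [Nonempty A]
  (p : Kernel (S × A) S) (R : S → Bool) (h : S × A → ℝ)

noncomputable def averagedTopt (a : ℝ) (Q : S × A → ℝ) : S × A → ℝ :=
  fun sa => (1 - a) * Q sa + a * Topt p R h Q sa

lemma measurable_averagedTopt (hR : Measurable R) (hh : Measurable h) {a : ℝ} {Q : S × A → ℝ}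
    (hQ : Measurable Q) : Measurable (averagedTopt p R h a Q) :=
  (measurable_const.mul hQ).add (measurable_const.mul (measurable_Topt p R h hR hh hQ))

variable [IsMarkovKernel p]

lemma exists_abs_averagedTopt_le (hh01 : ∀ sa, 0 ≤ h sa ∧ h sa ≤ 1) {a : ℝ} {Q : S × A → ℝ}
    (hb : ∃ C, ∀ sa, |Q sa| ≤ C) : ∃ C, ∀ sa, |averagedTopt p R h a Q sa| ≤ C := by
  obtain ⟨C, hC⟩ := hb
  refine ⟨|1 - a| * C + |a| * max 1 C, fun sa => (abs_add_le _ _).trans ?_⟩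
  rw [abs_mul, abs_mul]
  gcongr
  exacts [hC sa, abs_Topt_le p R h hh01 hC sa]

lemma supNorm_averagedTopt_sub_le (hh1 : ∀ sa, h sa ≤ 1) {δ : ℝ} (hδ1 : δ ≤ 1)
    (hhaz : ∀ sa, R sa.1 = false → δ ≤ h sa) {a : ℝ} (ha0 : 0 ≤ a) (ha1 : a ≤ 1)
    {Q J : S × A → ℝ} (hQ : Measurable Q) (hbQ : ∃ C, ∀ sa, |Q sa| ≤ C)
    (hJ : Measurable J) (hbJ : ∃ C, ∀ sa, |J sa| ≤ C) (hfix : Topt p R h J = J) :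
    supNorm (averagedTopt p R h a Q - J) ≤ (1 - a * δ) * supNorm (Q - J) := by
  set D := supNorm (Q - J)
  have hD : ∀ sa, |Q sa - J sa| ≤ D := abs_le_supNorm (exists_abs_sub_le hbQ hbJ)
  have hT := abs_Topt_sub_Topt_le p R h hh1 hδ1 hhaz hQ hbQ hJ hbJ hD
  refine supNorm_le (fun sa => ?_) (mul_nonneg (by nlinarith) (supNorm_nonneg _))
  have hsplit : (averagedTopt p R h a Q - J) sa
      = (1 - a) * (Q sa - J sa) + a * (Topt p R h Q sa - Topt p R h J sa) := by
    rw [hfix]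
    simp only [averagedTopt, Pi.sub_apply]
    ring
  calc |(averagedTopt p R h a Q - J) sa|
      ≤ |1 - a| * |Q sa - J sa| + |a| * |Topt p R h Q sa - Topt p R h J sa| := by
        rw [hsplit, ← abs_mul, ← abs_mul]
        exact abs_add_le _ _
    _ ≤ (1 - a) * D + a * ((1 - δ) * D) := by
        rw [abs_of_nonneg (sub_nonneg.2 ha1), abs_of_nonneg ha0]
        gcongr
        exacts [hD sa, hT sa]
    _ = (1 - a * δ) * D := by ring

end Averaged

theorem stmt_18_general
    {S A : Type*} [MeasurableSpace S] [MeasurableSpace A]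
    [Fintype A] [Nonempty A]
    (p : ProbabilityTheory.Kernel (S × A) S) [IsMarkovKernel p]
    (R : S → Bool) (hR : Measurable R)
    (h : S × A → ℝ) (hh : Measurable h) (hh01 : ∀ sa, 0 ≤ h sa ∧ h sa ≤ 1)
    (δ : ℝ) (hδ0 : 0 < δ) (hδ1 : δ ≤ 1) (hhaz : ∀ sa, R sa.1 = false → δ ≤ h sa)
    (γ : ℝ) (hγ : γ = 1 - δ)
    (Jstar : S × A → ℝ) (hJsm : Measurable Jstar) (hJsb : ∃ C, ∀ sa, |Jstar sa| ≤ C)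
    (hfix : Topt p R h Jstar = Jstar)
    (α : ℕ → ℝ) (hα : ∀ k, 0 ≤ α k ∧ α k ≤ 1)
    (hdiv : Tendsto (fun n : ℕ => ∑ k ∈ Finset.range n, α k) atTop atTop)
    (Q : ℕ → S × A → ℝ) (hQ0m : Measurable (Q 0)) (hQ0b : ∃ C, ∀ sa, |Q 0 sa| ≤ C)
    (hrec : ∀ k : ℕ, Q (k + 1) =
      fun sa => (1 - α k) * Q k sa + α k * Topt p R h (Q k) sa) :
    (∀ k : ℕ, supNorm (Q k - Jstar) ≤
        (∏ j ∈ Finset.range k, (1 - α j * (1 - γ))) * supNorm (Q 0 - Jstar)) ∧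
      Tendsto (fun k : ℕ => supNorm (Q k - Jstar)) atTop (nhds 0) := by
  rw [show 1 - γ = δ by rw [hγ]; ring]
  have hQ : ∀ k, Measurable (Q k) ∧ ∃ C, ∀ sa, |Q k sa| ≤ C := by
    intro k
    induction k with
    | zero => exact ⟨hQ0m, hQ0b⟩
    | succ k ih =>
      rw [hrec k]
      exact ⟨measurable_averagedTopt p R h hR hh ih.1, exists_abs_averagedTopt_le p R h hh01 ih.2⟩
  have hstep (k : ℕ) :
      supNorm (Q (k + 1) - Jstar) ≤ (1 - α k * δ) * supNorm (Q k - Jstar) := by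
    rw [hrec k]
    exact supNorm_averagedTopt_sub_le p R h (fun sa => (hh01 sa).2) hδ1 hhaz (hα k).1 (hα k).2
      (hQ k).1 (hQ k).2 hJsm hJsb hfix
  have hfac (k : ℕ) : α k * δ ≤ 1 := mul_le_one₀ (hα k).2 hδ0.le hδ1
  have hbound := le_prod_mul_of_le_mul (d := fun k => supNorm (Q k - Jstar))
    (fun k => sub_nonneg.2 (hfac k)) hstep
  refine ⟨hbound, squeeze_zero (fun k => supNorm_nonneg _) hbound ?_⟩
  have hsum : Tendsto (fun n => ∑ k ∈ Finset.range n, α k * δ) atTop atTop := by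
    simpa only [Finset.sum_mul] using hdiv.atTop_mul_const hδ0
  simpa using (tendsto_prod_one_sub_of_tendsto_sum hfac hsum).mul_const (supNorm (Q 0 - Jstar))

theorem stmt_18
    {S A : Type*} [MeasurableSpace S] [MeasurableSpace A]
    [Fintype A] [Nonempty A] [MeasurableSingletonClass A]
    (p : ProbabilityTheory.Kernel (S × A) S) [IsMarkovKernel p]
    (R : S → Bool) (hR : Measurable R)
    (h : S × A → ℝ) (hh : Measurable h) (hh01 : ∀ sa, 0 ≤ h sa ∧ h sa ≤ 1)
    (δ : ℝ) (hδ0 : 0 < δ) (hδ1 : δ ≤ 1) (hhaz : ∀ sa, R sa.1 = false → δ ≤ h sa)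
    (γ : ℝ) (hγ : γ = 1 - δ)
    (Jstar : S × A → ℝ) (hJsm : Measurable Jstar) (hJsb : ∃ C, ∀ sa, |Jstar sa| ≤ C)
    (hfix : Topt p R h Jstar = Jstar)
    (α : ℕ → ℝ) (hα : ∀ k, 0 ≤ α k ∧ α k ≤ 1)
    (hdiv : Tendsto (fun n : ℕ => ∑ k ∈ Finset.range n, α k) atTop atTop)
    (Q : ℕ → S × A → ℝ) (hQ0m : Measurable (Q 0)) (hQ0b : ∃ C, ∀ sa, |Q 0 sa| ≤ C)
    (hrec : ∀ k : ℕ, Q (k + 1) =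
      fun sa => (1 - α k) * Q k sa + α k * Topt p R h (Q k) sa) :
    (∀ k : ℕ, supNorm (Q k - Jstar) ≤
        (∏ j ∈ Finset.range k, (1 - α j * (1 - γ))) * supNorm (Q 0 - Jstar)) ∧
      Tendsto (fun k : ℕ => supNorm (Q k - Jstar)) atTop (nhds 0) :=
  stmt_18_general p R hR h hh hh01 δ hδ0 hδ1 hhaz γ hγ Jstar hJsm hJsb hfix α hα hdiv Q hQ0m hQ0b
    hrec
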